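/- Given an infinite i.i.d. sequence of uniform random vectors in $\mathbb{F}_2^m$, the expected value of the minimum number $A$ of initial vectors needed to span $\mathbb{F}_2^m$ is $\mathbb{E}[A] = m + \sum_{i=1}^{m} \frac{1}{2^i - 1}$. -/

import Mathlib

/-! Over a field `K` with `b` elements, the first `n` vectors span `K^m` with probability
`spanningProb b m n`, the proportion of spanning `n`-tuples, so `E[A] = ∑ₙ P(A > n)` is
`∑ₙ (1 - spanningProb b m n)`. Telescoping over the dimension gives
`1 - spanningProb b m n = ∑_{j<m} bʲ⁻ⁿ spanningProb b j n`, and each `∑ₙ b⁻ⁿ spanningProb b j n`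
is found by a second telescoping, in `n`: the increments of `n ↦ spanningProb b (j + 1) n`, which
climbs from `0` to `1`, are `(bʲ - b⁻¹) b⁻ⁿ spanningProb b j n`. -/

open MeasureTheory ProbabilityTheory
open scoped ENNReal

instance : MeasurableSpace (ZMod 2) := ⊤

open Finset Filter Topology

/-- For `b = |K|`, the proportion of `n`-tuples of vectors of `K^m` that span `K^m`. -/
noncomputable def spanningProb (b : ℝ) (m n : ℕ) : ℝ := ∏ i ∈ range m, (1 - b ^ i / b ^ n)

section SpanningProb

variable {b : ℝ}

lemma spanningProb_succ (m n : ℕ) :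
    spanningProb b (m + 1) n = spanningProb b m n * (1 - b ^ m / b ^ n) :=
  prod_range_succ _ _

lemma spanningProb_succ_succ (hb : b ≠ 0) (m n : ℕ) :
    spanningProb b (m + 1) (n + 1) = (1 - 1 / b ^ (n + 1)) * spanningProb b m n := by
  rw [spanningProb, prod_range_succ', pow_zero, mul_comm]
  congr 1
  refine prod_congr rfl fun i _ => ?_
  rw [pow_succ, pow_succ, mul_div_mul_right _ _ hb]

lemma spanningProb_eq_zero_of_lt (hb : b ≠ 0) {m n : ℕ} (h : n < m) : spanningProb b m n = 0 :=
  prod_eq_zero (mem_range.2 h) (by rw [div_self (pow_ne_zero _ hb), sub_self])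

lemma spanningProb_nonneg (hb : 1 ≤ b) (m n : ℕ) : 0 ≤ spanningProb b m n := by
  rcases lt_or_ge n m with h | h
  · rw [spanningProb_eq_zero_of_lt (by positivity) h]
  · refine prod_nonneg fun i hi => sub_nonneg.2 ?_
    exact div_le_one_of_le₀ (pow_le_pow_right₀ hb (by simp at hi; omega)) (by positivity)

lemma spanningProb_eq_prod_sub_mul (hb : b ≠ 0) (m n : ℕ) :
    spanningProb b m n = (∏ i ∈ range m, (b ^ n - b ^ i)) * ((b ^ m)⁻¹) ^ n := by
  have hpow : ((b ^ m)⁻¹) ^ n = ∏ _i ∈ range m, (b ^ n)⁻¹ := by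
    rw [prod_const, card_range, ← inv_pow, ← inv_pow, ← pow_mul, ← pow_mul, mul_comm]
  rw [hpow, ← prod_mul_distrib]
  refine prod_congr rfl fun i _ => ?_
  field_simp

lemma tendsto_spanningProb_atTop (hb : 1 < b) (m : ℕ) :
    Tendsto (spanningProb b m) atTop (𝓝 1) := by
  rw [← prod_const_one (s := range m)]
  refine tendsto_finsetProd _ fun i _ => ?_
  have h : Tendsto (fun n : ℕ => b ^ i / b ^ n) atTop (𝓝 0) := by
    simpa [div_eq_mul_inv, ← inv_pow] using (tendsto_pow_atTop_nhds_zero_of_lt_one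
      (by positivity) (inv_lt_one_of_one_lt₀ hb)).const_mul (b ^ i)
  simpa using h.const_sub 1

lemma hasSum_spanningProb_div_pow (hb : 1 < b) (j : ℕ) :
    HasSum (fun n => spanningProb b j n / b ^ n) (b ^ j - b⁻¹)⁻¹ := by
  have hb0 : b ≠ 0 := by positivity
  have hc : 0 < b ^ j - b⁻¹ := sub_pos.2 ((inv_lt_one_of_one_lt₀ hb).trans_le (one_le_pow₀ hb.le))
  have hstep : ∀ n, spanningProb b (j + 1) (n + 1) - spanningProb b (j + 1) n =
      (b ^ j - b⁻¹) * (spanningProb b j n / b ^ n) := by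
    intro n
    rw [spanningProb_succ_succ hb0, spanningProb_succ]
    field_simp
    ring
  have htel : HasSum (fun n => (b ^ j - b⁻¹) * (spanningProb b j n / b ^ n)) 1 := by
    refine (hasSum_iff_tendsto_nat_of_nonneg (fun n => ?_) 1).2 ?_
    · exact mul_nonneg hc.le (div_nonneg (spanningProb_nonneg hb.le _ _) (by positivity))
    · simp_rw [← hstep, sum_range_sub, spanningProb_eq_zero_of_lt hb0 (Nat.succ_pos j), sub_zero]
      exact tendsto_spanningProb_atTop hb _
  simpa [← mul_assoc, inv_mul_cancel₀ hc.ne'] using htel.mul_left (b ^ j - b⁻¹)⁻¹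

lemma one_sub_spanningProb_eq_sum (m n : ℕ) :
    1 - spanningProb b m n = ∑ j ∈ range m, b ^ j * (spanningProb b j n / b ^ n) := by
  have hstep : ∀ j, spanningProb b j n - spanningProb b (j + 1) n =
      b ^ j * (spanningProb b j n / b ^ n) := by
    intro j
    rw [spanningProb_succ]
    ring
  rw [← sum_congr rfl fun j _ => hstep j, sum_range_sub']
  simp [spanningProb]

theorem hasSum_one_sub_spanningProb (hb : 1 < b) (m : ℕ) :
    HasSum (fun n => 1 - spanningProb b m n) (m + ∑ i ∈ Icc 1 m, (b ^ i - 1)⁻¹) := by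
  have hterm : ∀ j, b ^ j * (b ^ j - b⁻¹)⁻¹ = 1 + (b ^ (j + 1) - 1)⁻¹ := by
    intro j
    have h1 : b ^ (j + 1) - 1 ≠ 0 := (sub_pos.2 (one_lt_pow₀ hb (Nat.succ_ne_zero j))).ne'
    have h2 : b ^ j - b⁻¹ = (b ^ (j + 1) - 1) / b := by
      field_simp
      ring
    rw [h2]
    field_simp
    ring
  simp_rw [one_sub_spanningProb_eq_sum]
  have h := hasSum_sum fun j (_ : j ∈ range m) =>
    (hasSum_spanningProb_div_pow hb j).mul_left (b ^ j)
  rw [sum_congr rfl fun j _ => hterm j, sum_add_distrib, sum_const, card_range, nsmul_one] at h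
  rw [← Ico_add_one_right_eq_Icc, sum_Ico_eq_sum_range, add_tsub_cancel_right]
  simpa only [add_comm 1] using h

end SpanningProb

lemma span_range_eq_top_iff_linearIndependent_swap {K : Type*} [Field K] {n m : ℕ}
    (v : Fin n → Fin m → K) :
    Submodule.span K (Set.range v) = ⊤ ↔ LinearIndependent K (Function.swap v) := by
  have hrow : (Matrix.of v).rank = Module.finrank K (Submodule.span K (Set.range v)) :=
    (Matrix.of v).rank_eq_finrank_span_row
  have hcol : (Matrix.of v).rank = Set.finrank K (Set.range (Function.swap v)) :=
    (Matrix.of v).rank_eq_finrank_span_cols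
  rw [Submodule.eq_top_iff_finrank_eq, linearIndependent_iff_card_eq_finrank_span, ← hrow, ← hcol,
    Module.finrank_fin_fun, Fintype.card_fin, eq_comm]

theorem card_spanning_tuples (K : Type*) [Field K] [Fintype K] (m n : ℕ) :
    (Nat.card {v : Fin n → Fin m → K // Submodule.span K (Set.range v) = ⊤} : ℝ) =
      ∏ i ∈ range m, ((Fintype.card K : ℝ) ^ n - Fintype.card K ^ i) := by
  let e := (Equiv.piComm fun (_ : Fin n) (_ : Fin m) => K).subtypeEquiv
    (q := fun s => LinearIndependent K s) span_range_eq_top_iff_linearIndependent_swap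
  rw [Nat.card_congr e]
  rcases lt_or_ge n m with h | h
  · have : IsEmpty {s : Fin m → Fin n → K // LinearIndependent K s} :=
      ⟨fun s => by simpa [h.not_ge] using s.2.fintype_card_le_finrank⟩
    rw [Nat.card_of_isEmpty, Nat.cast_zero, prod_eq_zero (mem_range.2 h) (sub_self _)]
  · rw [card_linearIndependent (by simpa using h),
      Fin.prod_univ_eq_prod_range (fun i => _ ^ _ - _ ^ i), Nat.cast_prod]
    refine prod_congr rfl fun i hi => ?_
    rw [Module.finrank_fin_fun,
      Nat.cast_sub (Nat.pow_le_pow_right Fintype.card_pos (by simp at hi; omega))]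
    push_cast
    rfl

lemma Nat.sInf_setOf_mem_le_iff {α : Type*} {S : ℕ → Set α} (hS : Monotone S) (x : α) (n : ℕ) :
    sInf {k | x ∈ S k} ≤ n ↔ x ∈ S n ∨ ∀ k, x ∉ S k := by
  constructor
  · intro h
    by_cases hne : ∃ k, x ∈ S k
    · exact .inl (hS h (Nat.sInf_mem hne))
    · exact .inr (not_exists.1 hne)
  · rintro (h | h)
    · exact Nat.sInf_le h
    · simp [h]

section Measure

variable {Ω : Type*} [MeasurableSpace Ω] {μ : Measure Ω}

lemma nullMeasurableSet_of_measure_add_measure_compl_le [IsFiniteMeasure μ] {s : Set Ω}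
    (h : μ s + μ sᶜ ≤ μ Set.univ) : NullMeasurableSet s μ := by
  set t := toMeasurable μ s
  set t' := toMeasurable μ sᶜ
  have ht : MeasurableSet t := measurableSet_toMeasurable μ s
  have ht' : MeasurableSet t' := measurableSet_toMeasurable μ sᶜ
  have hunion : t ∪ t' = Set.univ :=
    Set.eq_univ_of_forall fun ω => (em (ω ∈ s)).imp (subset_toMeasurable μ s ·)
      (subset_toMeasurable μ sᶜ ·)
  -- `t ∩ t'` contains `t \ s`, and inclusion–exclusion shows that it is null
  have hnull : μ (t ∩ t') = 0 := by
    refine nonpos_iff_eq_zero.1 (ENNReal.le_of_add_le_add_left (measure_ne_top μ Set.univ) ?_)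
    calc μ Set.univ + μ (t ∩ t') = μ (t ∪ t') + μ (t ∩ t') := by rw [hunion]
      _ = μ s + μ sᶜ := by
        rw [measure_union_add_inter t ht', measure_toMeasurable, measure_toMeasurable]
      _ ≤ μ Set.univ + 0 := by rwa [add_zero]
  refine ht.nullMeasurableSet.congr (ae_eq_set.2 ⟨measure_mono_null ?_ hnull, ?_⟩)
  · exact fun ω hω => ⟨hω.1, subset_toMeasurable μ sᶜ hω.2⟩
  · rw [Set.sdiff_eq_empty.2 (subset_toMeasurable μ s), measure_empty]

lemma nullMeasurable_of_sum_measure_preimage_singleton_le [IsFiniteMeasure μ] {β : Type*}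
    [Fintype β] [MeasurableSpace β] {f : Ω → β} (h : ∑ b, μ (f ⁻¹' {b}) ≤ μ Set.univ) :
    NullMeasurable f μ := by
  classical
  have hfiber : ∀ b, NullMeasurableSet (f ⁻¹' {b}) μ := by
    intro b
    refine nullMeasurableSet_of_measure_add_measure_compl_le (le_trans ?_ h)
    rw [← add_sum_erase _ _ (mem_univ b)]
    gcongr
    calc μ (f ⁻¹' {b})ᶜ = μ (⋃ c ∈ univ.erase b, f ⁻¹' {c}) := by
          congr 1
          ext ω
          simp [eq_comm]
      _ ≤ ∑ c ∈ univ.erase b, μ (f ⁻¹' {c}) := measure_biUnion_finset_le _ _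
  intro s _
  rw [← Set.biUnion_preimage_singleton]
  exact .biUnion s.to_countable fun b _ => hfiber b

lemma measure_preimage_fin_pi_singleton {β : Type*} [MeasurableSpace β]
    [MeasurableSingletonClass β] {q : ℕ → Ω → β} (hindep : iIndepFun q μ) {n : ℕ}
    (v : Fin n → β) :
    μ ((fun ω (i : Fin n) => q i ω) ⁻¹' {v}) = ∏ i : Fin n, μ (q i ⁻¹' {v i}) := by
  have hpre : (fun ω (i : Fin n) => q i ω) ⁻¹' {v} = ⋂ i : Fin n, q i ⁻¹' {v i} := by
    ext ω
    simp [funext_iff]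
  rw [hpre]
  exact (hindep.precomp Fin.val_injective).meas_iInter fun i =>
    ⟨{v i}, measurableSet_singleton _, rfl⟩

lemma lintegral_natCast_eq_tsum_measure_lt {f : Ω → ℕ}
    (hf : ∀ n, NullMeasurableSet {ω | n < f ω} μ) :
    ∫⁻ ω, (f ω : ℝ≥0∞) ∂μ = ∑' n, μ {ω | n < f ω} := by
  have hpt : ∀ ω, (f ω : ℝ≥0∞) = ∑' n, {ω | n < f ω}.indicator 1 ω := by
    intro ω
    rw [tsum_eq_sum (s := range (f ω)) fun n hn => Set.indicator_of_notMem (by simpa using hn) _,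
      sum_congr rfl fun n hn => Set.indicator_of_mem (by simpa using hn) _]
    simp
  simp_rw [hpt]
  rw [lintegral_tsum (f := fun n => {ω | n < f ω}.indicator 1) fun n =>
    aemeasurable_one.indicator₀ (hf n)]
  simp_rw [lintegral_indicator_one₀ (hf _)]

end Measure

section SpanningTime

variable {Ω K : Type*} [Field K] {m : ℕ}

def spanEvent (q : ℕ → Ω → Fin m → K) (n : ℕ) : Set Ω :=
  {ω | Submodule.span K ((fun i => q i ω) '' Set.Iio n) = ⊤}

lemma spanEvent_mono (q : ℕ → Ω → Fin m → K) : Monotone (spanEvent q) :=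
  fun _ _ hkn _ hω => eq_top_iff.2 <| hω.ge.trans <|
    Submodule.span_mono (Set.image_mono (Set.Iio_subset_Iio hkn))

lemma spanEvent_eq_preimage (q : ℕ → Ω → Fin m → K) (n : ℕ) :
    spanEvent q n =
      (fun ω (i : Fin n) => q i ω) ⁻¹' {v | Submodule.span K (Set.range v) = ⊤} := by
  ext ω
  simp only [spanEvent, Set.mem_preimage, ← Fin.range_val, ← Set.range_comp]
  rfl

variable [Fintype K] [MeasurableSpace Ω] {μ : Measure Ω} [IsProbabilityMeasure μ]
  [MeasurableSpace K] [MeasurableSingletonClass K] {q : ℕ → Ω → Fin m → K}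

/-- `iIndepFun` does not make the `q i` measurable; being uniform makes them a.e.-measurable. -/
lemma aemeasurable_fin_pi_of_uniform
    (hunif : ∀ i w, μ (q i ⁻¹' {w}) = ((Fintype.card K : ℝ≥0∞) ^ m)⁻¹) (n : ℕ) :
    AEMeasurable (fun ω (i : Fin n) => q i ω) μ := by
  refine aemeasurable_pi_lambda _ fun i =>
    (nullMeasurable_of_sum_measure_preimage_singleton_le (le_of_eq ?_)).aemeasurable
  simp [hunif, ENNReal.mul_inv_cancel]

lemma nullMeasurableSet_spanEvent
    (hunif : ∀ i w, μ (q i ⁻¹' {w}) = ((Fintype.card K : ℝ≥0∞) ^ m)⁻¹) (n : ℕ) :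
    NullMeasurableSet (spanEvent q n) μ := by
  rw [spanEvent_eq_preimage]
  exact (aemeasurable_fin_pi_of_uniform hunif n).nullMeasurable (Set.toFinite _).measurableSet

lemma measureReal_spanEvent (hindep : iIndepFun q μ)
    (hunif : ∀ i w, μ (q i ⁻¹' {w}) = ((Fintype.card K : ℝ≥0∞) ^ m)⁻¹) (n : ℕ) :
    μ.real (spanEvent q n) = spanningProb (Fintype.card K) m n := by
  have hX := aemeasurable_fin_pi_of_uniform hunif n
  rw [spanEvent_eq_preimage, measureReal_def, ← Measure.map_apply_of_aemeasurable hX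
    (Set.toFinite _).measurableSet, ← coe_filter_univ, ← sum_measure_singleton]
  simp_rw [Measure.map_apply_of_aemeasurable hX (measurableSet_singleton _),
    measure_preimage_fin_pi_singleton hindep, hunif, prod_const, card_univ, Fintype.card_fin,
    sum_const, nsmul_eq_mul]
  rw [← Fintype.card_subtype, ← Nat.card_eq_fintype_card, ENNReal.toReal_mul]
  simp only [ENNReal.toReal_natCast, card_spanning_tuples, ENNReal.toReal_pow, ENNReal.toReal_inv]
  rw [spanningProb_eq_prod_sub_mul (by simp)]

lemma measure_compl_spanEvent (hindep : iIndepFun q μ)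
    (hunif : ∀ i w, μ (q i ⁻¹' {w}) = ((Fintype.card K : ℝ≥0∞) ^ m)⁻¹) (n : ℕ) :
    μ (spanEvent q n)ᶜ = ENNReal.ofReal (1 - spanningProb (Fintype.card K) m n) := by
  rw [← ofReal_measureReal, measureReal_compl₀ (nullMeasurableSet_spanEvent hunif n),
    probReal_univ, measureReal_spanEvent hindep hunif]

lemma measure_iInter_compl_spanEvent (hindep : iIndepFun q μ)
    (hunif : ∀ i w, μ (q i ⁻¹' {w}) = ((Fintype.card K : ℝ≥0∞) ^ m)⁻¹) :
    μ (⋂ k, (spanEvent q k)ᶜ) = 0 := by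
  have hb : 1 < (Fintype.card K : ℝ) := by exact_mod_cast Fintype.one_lt_card
  have htend : Tendsto (fun k => ENNReal.ofReal (1 - spanningProb (Fintype.card K) m k)) atTop
      (𝓝 0) := by
    simpa using ENNReal.tendsto_ofReal ((tendsto_spanningProb_atTop hb m).const_sub 1)
  refine le_antisymm (ge_of_tendsto' htend fun k => ?_) zero_le
  rw [← measure_compl_spanEvent hindep hunif k]
  exact measure_mono (Set.iInter_subset _ k)

theorem integral_spanningTime (hindep : iIndepFun q μ)
    (hunif : ∀ i w, μ (q i ⁻¹' {w}) = ((Fintype.card K : ℝ≥0∞) ^ m)⁻¹) {A : Ω → ℕ}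
    (hA : ∀ ω, A ω = sInf {n | ω ∈ spanEvent q n}) :
    ∫ ω, (A ω : ℝ) ∂μ = m + ∑ i ∈ Icc 1 m, ((Fintype.card K : ℝ) ^ i - 1)⁻¹ := by
  have hS := nullMeasurableSet_spanEvent hunif
  -- `sInf ∅ = 0`, so `A` vanishes on the null event where the vectors never span
  have hlt : ∀ n, {ω | n < A ω} = (spanEvent q n)ᶜ ∩ (⋂ k, (spanEvent q k)ᶜ)ᶜ := fun n => by
    ext ω
    simp only [Set.mem_ofPred_eq, hA, ← not_le, Nat.sInf_setOf_mem_le_iff (spanEvent_mono q),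
      not_or, Set.mem_inter_iff, Set.mem_compl_iff, Set.mem_iInter]
  have hlt_meas : ∀ n, NullMeasurableSet {ω | n < A ω} μ := fun n => by
    rw [hlt]
    exact (hS n).compl.inter (NullMeasurableSet.iInter fun k => (hS k).compl).compl
  have hA_meas : NullMeasurable A μ := measurable_of_Ioi hlt_meas
  rw [integral_eq_lintegral_of_nonneg_ae (.of_forall fun ω => Nat.cast_nonneg _)
    (measurable_from_top.comp_aemeasurable hA_meas.aemeasurable).aestronglyMeasurable]
  simp_rw [ENNReal.ofReal_natCast, lintegral_natCast_eq_tsum_measure_lt hlt_meas, hlt,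
    measure_inter_conull (by rw [compl_compl]; exact measure_iInter_compl_spanEvent hindep hunif),
    measure_compl_spanEvent hindep hunif]
  have hsum := hasSum_one_sub_spanningProb (b := Fintype.card K)
    (by exact_mod_cast Fintype.one_lt_card) m
  have hnonneg : ∀ n, 0 ≤ 1 - spanningProb (Fintype.card K) m n := fun n =>
    sub_nonneg.2 ((measureReal_spanEvent hindep hunif n).symm.trans_le measureReal_le_one)
  rw [← ENNReal.ofReal_tsum_of_nonneg hnonneg hsum.summable, hsum.tsum_eq,
    ENNReal.toReal_ofReal (hsum.nonneg hnonneg)]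

end SpanningTime

theorem expected_min_spanning_count_general
    {Ω : Type*} [MeasurableSpace Ω] (μ : Measure Ω) [IsProbabilityMeasure μ]
    {m : ℕ} (q : ℕ → Ω → (Fin m → ZMod 2))
    (hindep : iIndepFun q μ)
    (hunif : ∀ i, ∀ w : Fin m → ZMod 2, μ (q i ⁻¹' {w}) = ((2 : ℝ≥0∞) ^ m)⁻¹)
    (A : Ω → ℕ)
    (hA : ∀ ω, A ω = sInf {n | Submodule.span (ZMod 2)
      ((fun i => q i ω) '' (Set.Iio n)) = ⊤}) :
    ∫ ω, (A ω : ℝ) ∂μ = m + ∑ i ∈ Finset.Icc 1 m, ((2 : ℝ) ^ i - 1)⁻¹ := by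
  simpa [ZMod.card] using integral_spanningTime hindep (by simpa [ZMod.card] using hunif) hA

/-- The expected minimum number `A` of initial vectors of an infinite i.i.d.
uniform sequence in `𝔽₂ᵐ` needed to span `𝔽₂ᵐ` is `m + ∑_{i=1}^m 1/(2ⁱ - 1)`. -/
theorem expected_min_spanning_count
    {Ω : Type*} [MeasurableSpace Ω] (μ : Measure Ω) [IsProbabilityMeasure μ]
    {m : ℕ} (hm : 1 ≤ m) (q : ℕ → Ω → (Fin m → ZMod 2))
    (hindep : iIndepFun q μ)
    (hunif : ∀ i, ∀ w : Fin m → ZMod 2, μ (q i ⁻¹' {w}) = ((2 : ℝ≥0∞) ^ m)⁻¹)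
    (A : Ω → ℕ)
    (hA : ∀ ω, A ω = sInf {n | Submodule.span (ZMod 2)
      ((fun i => q i ω) '' (Set.Iio n)) = ⊤}) :
    ∫ ω, (A ω : ℝ) ∂μ = m + ∑ i ∈ Finset.Icc 1 m, ((2 : ℝ) ^ i - 1)⁻¹ :=
  expected_min_spanning_count_general μ q hindep hunif A hA
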